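/- Let G be an abelian group with finite injective rank. Then G is co-finitely Hopfian if and only if G is divisible of finite rank (equivalently, since such G is torsion-free, G ≅ ℚ^n for some n < ω). -/

import Mathlib

open TensorProduct

/-- An abelian group `G` has *finite injective rank* if an endomorphism `φ` of `G`
is injective exactly when the quotient `G / φ(G)` is finite. -/
def FiniteInjectiveRank (G : Type*) [AddCommGroup G] : Prop :=
  ∀ φ : G →+ G, Function.Injective φ ↔ Finite (G ⧸ φ.range)

/-- An abelian group `G` is *co-finitely Hopfian* if every endomorphism `φ` of `G`
with `G / φ(G)` finite is surjective. -/
def CoFinitelyHopfian (G : Type*) [AddCommGroup G] : Prop :=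
  ∀ φ : G →+ G, Finite (G ⧸ φ.range) → Function.Surjective φ

/-!
An endomorphism with finite cokernel and nonzero kernel contradicts finite injective rank, and
such endomorphisms exist as soon as `G` has an element `x` of prime order `p`. If `x` has finite
`p`-height, say `x = p ^ N • y` with `x ∉ p ^ (N + 1) • G`, then `y` spans a cyclic direct summand
`ℤ / p ^ (N + 1)` (split off by a character `G → ℝ / ℤ`), and the identity minus the projection
onto it will do. Otherwise every element of order `p` has infinite height, so the `p`-primary
component is divisible, hence a direct summand, and multiplication by `p` on it together with the
identity on a complement will do. Hence `G` is torsion-free.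

For torsion-free `G`, multiplication by `n ≠ 0` is injective, so co-finitely Hopfian forces
divisibility, while a divisible group has no nontrivial finite quotient. A torsion-free divisible
group is the `ℚ`-vector space `ℚ ⊗ G`, and an infinite-dimensional `V ≅ V × ℚ` has an injective
endomorphism with cokernel `ℚ`.
-/

open Function

section Hopfian

variable {G H : Type*} [AddCommGroup G] [AddCommGroup H]

theorem FiniteInjectiveRank.injective_of_surjective (h : FiniteInjectiveRank G) {φ : G →+ G}
    (hφ : Surjective φ) : Injective φ := by
  refine (h φ).mpr (AddSubgroup.finiteIndex_iff_finite_quotient.mp ?_)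
  rw [AddMonoidHom.range_eq_top.mpr hφ]
  infer_instance

theorem FiniteInjectiveRank.of_addEquiv (e : G ≃+ H) (h : FiniteInjectiveRank G) :
    FiniteInjectiveRank H := by
  intro φ
  let ψ : G →+ G := e.symm.toAddMonoidHom.comp (φ.comp e.toAddMonoidHom)
  have hinj : Injective ψ ↔ Injective φ := by
    simp [ψ, EquivLike.injective_comp]
  have hrange : ψ.range.map e.toAddMonoidHom = φ.range := by
    ext x
    refine ⟨?_, fun ⟨y, hy⟩ => ⟨ψ (e.symm y), ⟨_, rfl⟩, by simp [ψ, hy]⟩⟩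
    rintro ⟨_, ⟨g, rfl⟩, rfl⟩
    exact ⟨e g, by simp [ψ]⟩
  rw [← hinj, h ψ, (QuotientAddGroup.congr _ _ e hrange).finite_iff]

end Hopfian

section Cyclic

theorem ZMod.lift_zmultiplesHom_one {m : ℕ} {A : Type*} [AddCommGroup A] {a : A}
    (ha : zmultiplesHom A a m = 0) : ZMod.lift m ⟨zmultiplesHom A a, ha⟩ 1 = a := by
  simpa using ZMod.lift_coe m ⟨_, ha⟩ 1

variable {G Q : Type*} [AddCommGroup G] [AddCommGroup Q] {m : ℕ} [NeZero m]

theorem ZMod.exists_toAddCircle_eq {u : UnitAddCircle} (hu : m • u = 0) :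
    ∃ j : ZMod m, toAddCircle j = u := by
  obtain ⟨k, -, rfl⟩ := (AddCircle.nsmul_eq_zero_iff (NeZero.pos m)).mp hu
  exact ⟨k, by rw [toAddCircle_natCast, mul_one]⟩

theorem exists_addMonoidHom_zmod_apply_eq_one {q : Q} (hq : addOrderOf q = m)
    (hQ : ∀ a : Q, m • a = 0) : ∃ c : Q →+ ZMod m, c q = 1 := by
  let f : ZMod m →+ Q := ZMod.lift m ⟨zmultiplesHom Q q, by simp [← hq]⟩
  have hf : Injective f := by
    rw [ZMod.lift_injective]
    intro k hk
    rw [ZMod.intCast_zmod_eq_zero_iff_dvd, ← hq, addOrderOf_dvd_iff_zsmul_eq_zero]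
    simpa using hk
  obtain ⟨χ, hχ⟩ := (Module.Baer.of_divisible UnitAddCircle).extension_property_addMonoidHom
    f hf ZMod.toAddCircle
  have hχm : ∀ a, ∃ j : ZMod m, ZMod.toAddCircle j = χ a := fun a =>
    ZMod.exists_toAddCircle_eq (by rw [← map_nsmul, hQ, map_zero])
  let c : Q →+ ZMod m :=
    (AddMonoidHom.ofInjective (ZMod.toAddCircle_injective m)).symm.toAddMonoidHom.comp
      (χ.codRestrict _ hχm)
  refine ⟨c, ZMod.toAddCircle_injective m ?_⟩
  have hχq : χ q = ZMod.toAddCircle (1 : ZMod m) := by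
    simpa [f, ZMod.lift_zmultiplesHom_one] using DFunLike.congr_fun hχ (1 : ZMod m)
  rw [← hχq, ← AddMonoidHom.ofInjective_apply (ZMod.toAddCircle_injective m)]
  simp [c, AddMonoidHom.codRestrict]

theorem FiniteInjectiveRank.eq_zero_of_zmod_apply_eq_one (h : FiniteInjectiveRank G) {y : G}
    (hy : m • y = 0) (c : G →+ ZMod m) (hc : c y = 1) : y = 0 := by
  let j : ZMod m →+ G := ZMod.lift m ⟨zmultiplesHom G y, by simpa using hy⟩
  -- `j ∘ c` projects onto the summand `⟨y⟩`, so `φ` kills `y` and fixes the finite-index `ker c`.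
  let φ : G →+ G := AddMonoidHom.id G - j.comp c
  have hφy : φ y = 0 := by simp [φ, j, hc, ZMod.lift_zmultiplesHom_one]
  have hker : c.ker ≤ φ.range := fun g hg => ⟨g, by simp_all [φ]⟩
  have : c.ker.FiniteIndex := AddSubgroup.finiteIndex_ker c
  have : φ.range.FiniteIndex := AddSubgroup.finiteIndex_of_le hker
  exact (h φ).mpr AddSubgroup.finite_quotient_of_finiteIndex (by rw [hφy, map_zero])

end Cyclic

section Height

variable {G : Type*} [AddCommGroup G] {p : ℕ}

theorem FiniteInjectiveRank.exists_pow_nsmul_eq (h : FiniteInjectiveRank G) (hp : p.Prime)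
    {z : G} (hz : p • z = 0) : ∀ N : ℕ, ∃ w : G, p ^ N • w = z
  | 0 => ⟨z, one_nsmul z⟩
  | N + 1 => by
    obtain ⟨y, rfl⟩ := h.exists_pow_nsmul_eq hp hz N
    by_contra hne
    -- the class of `y` then has order exactly `p ^ (N + 1)` modulo `p ^ (N + 1) • G`
    have := Fact.mk hp
    have : NeZero (p ^ (N + 1)) := ⟨pow_ne_zero _ hp.ne_zero⟩
    let H := (nsmulAddMonoidHom (p ^ (N + 1)) : G →+ G).range
    have hy : p ^ (N + 1) • y = 0 := by rwa [pow_succ', mul_smul]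
    have hord : addOrderOf (QuotientAddGroup.mk y : G ⧸ H) = p ^ (N + 1) := by
      refine addOrderOf_eq_prime_pow ?_ ?_
      · rw [← QuotientAddGroup.mk_nsmul, QuotientAddGroup.eq_zero_iff]
        exact fun ⟨w, hw⟩ => hne ⟨w, hw⟩
      · rw [← QuotientAddGroup.mk_nsmul, hy, QuotientAddGroup.mk_zero]
    obtain ⟨c, hc⟩ := exists_addMonoidHom_zmod_apply_eq_one hord fun a =>
      QuotientAddGroup.induction_on a fun g => by
        rw [← QuotientAddGroup.mk_nsmul, QuotientAddGroup.eq_zero_iff]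
        exact ⟨g, rfl⟩
    have hy0 := h.eq_zero_of_zmod_apply_eq_one hy (c.comp (QuotientAddGroup.mk' H)) hc
    exact hne ⟨0, by simp [hy0]⟩

end Height

section Primary

variable {G : Type*} [AddCommGroup G] {p : ℕ}

theorem exists_nsmul_eq_of_mem_primaryComponent
    (hinf : ∀ z : G, p • z = 0 → ∀ N : ℕ, ∃ w : G, p ^ N • w = z) {t : G}
    (ht : t ∈ AddCommGroup.primaryComponent G p) :
    ∃ s ∈ AddCommGroup.primaryComponent G p, p • s = t := by
  obtain ⟨e, he⟩ := ht
  induction e generalizing t with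
  | zero => exact ⟨0, zero_mem _, by simp_all⟩
  | succ e ih =>
    obtain ⟨w, hw⟩ := hinf (p ^ e • t) (by rw [smul_smul, ← pow_succ', he]) (e + 1)
    obtain ⟨s, hs, hps⟩ :=
      ih (t := t - p • w) (by rw [smul_sub, smul_smul, ← pow_succ, hw, sub_self])
    refine ⟨w + s, add_mem ⟨e + 2, ?_⟩ hs, by rw [smul_add, hps, add_sub_cancel]⟩
    rw [pow_succ', mul_smul, hw, smul_smul, ← pow_succ', he]

theorem surjective_nsmul_of_forall_pow_nsmul_eq_zero {A : Type*} [AddCommGroup A] (hp : p.Prime)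
    (hA : ∀ a : A, ∃ k : ℕ, p ^ k • a = 0) (hpA : Surjective (p • · : A → A)) {n : ℕ}
    (hn : n ≠ 0) : Surjective (n • · : A → A) := by
  induction n using Nat.recOnMul with
  | zero => exact absurd rfl hn
  | one => exact fun a => ⟨a, one_nsmul a⟩
  | prime q hq =>
    rcases eq_or_ne q p with rfl | hqp
    · exact hpA
    intro a
    obtain ⟨k, hk⟩ := hA a
    obtain ⟨α, β, hαβ⟩ :=
      Nat.isCoprime_iff_coprime.mpr (((Nat.coprime_primes hq hp).mpr hqp).pow_right k)
    refine ⟨α • a, ?_⟩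
    dsimp only
    rw [← natCast_zsmul, smul_smul, mul_comm, eq_sub_of_add_eq hαβ, sub_smul, one_smul, mul_smul,
      natCast_zsmul, hk, smul_zero, sub_zero]
  | mul a b iha ihb =>
    intro x
    obtain ⟨y, rfl⟩ := iha (left_ne_zero_of_mul hn) x
    obtain ⟨z, rfl⟩ := ihb (right_ne_zero_of_mul hn) y
    exact ⟨z, mul_smul a b z⟩

theorem FiniteInjectiveRank.eq_zero_of_mem_of_nsmul_eq_zero (h : FiniteInjectiveRank G)
    (T : AddSubgroup G) [DivisibleBy T ℤ] {n : ℕ} (hn : n ≠ 0) {x : G} (hxT : x ∈ T)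
    (hx : n • x = 0) : x = 0 := by
  obtain ⟨r, hr⟩ := (Module.Baer.of_divisible T).extension_property_addMonoidHom T.subtype
    Subtype.val_injective (AddMonoidHom.id T)
  have hr' : ∀ t : T, r t = t := DFunLike.congr_fun hr
  let π : G →+ G := T.subtype.comp r
  -- multiplication by `n` on `T`, the identity on the complement `ker r`
  let ψ : G →+ G := AddMonoidHom.id G - π + n • π
  have hψx : ψ x = 0 := by simp [ψ, π, hr' ⟨x, hxT⟩, hx]
  have hψ : Surjective ψ := by
    intro g
    obtain ⟨s, hs⟩ := DivisibleBy.surjective_smul T ℤ (Int.natCast_ne_zero.mpr hn) (r g)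
    simp only [natCast_zsmul] at hs
    refine ⟨g - r g + s, ?_⟩
    simp [ψ, π, hr', ← hs]
  exact h.injective_of_surjective hψ (by rw [hψx, map_zero])

end Primary

section TorsionFree

variable {G : Type*} [AddCommGroup G]

theorem IsOfFinAddOrder.exists_prime_nsmul_eq_zero {a : G} (ha : a ≠ 0)
    (hfin : IsOfFinAddOrder a) : ∃ p : ℕ, p.Prime ∧ ∃ x : G, x ≠ 0 ∧ p • x = 0 := by
  have hn1 : addOrderOf a ≠ 1 := by simpa using ha
  have hp := Nat.minFac_prime hn1
  refine ⟨_, hp, (addOrderOf a / (addOrderOf a).minFac) • a,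
    nsmul_ne_zero_of_lt_addOrderOf ?_ (Nat.div_lt_self hfin.addOrderOf_pos hp.one_lt), ?_⟩
  · exact (Nat.div_pos (Nat.minFac_le hfin.addOrderOf_pos) hp.pos).ne'
  · rw [smul_smul, Nat.mul_div_cancel' (Nat.minFac_dvd _), addOrderOf_nsmul_eq_zero]

theorem FiniteInjectiveRank.isAddTorsionFree (h : FiniteInjectiveRank G) : IsAddTorsionFree G := by
  refine .of_not_isOfFinAddOrder fun a ha hfin => ?_
  obtain ⟨p, hp, x, hx0, hpx⟩ := hfin.exists_prime_nsmul_eq_zero ha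
  let T := AddCommGroup.primaryComponent G p
  have hpT : Surjective (p • · : T → T) := fun t => by
    obtain ⟨s, hs, hps⟩ := exists_nsmul_eq_of_mem_primaryComponent
      (fun z hz => h.exists_pow_nsmul_eq hp hz) t.2
    exact ⟨⟨s, hs⟩, Subtype.ext hps⟩
  have hT : ∀ t : T, ∃ k : ℕ, p ^ k • t = 0 := fun ⟨t, k, hk⟩ => ⟨k, Subtype.ext hk⟩
  let : DivisibleBy T ℕ := divisibleByOfSMulRightSurj T ℕ
    (surjective_nsmul_of_forall_pow_nsmul_eq_zero hp hT hpT)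
  let := AddGroup.divisibleByIntOfDivisibleByNat T
  exact hx0 (h.eq_zero_of_mem_of_nsmul_eq_zero T hp.ne_zero ⟨1, by rwa [pow_one]⟩ hpx)

end TorsionFree

section Rational

variable (G : Type*) [AddCommGroup G]

instance isLocalizedModule_id_of_divisibleBy [IsAddTorsionFree G] [DivisibleBy G ℤ] :
    IsLocalizedModule (nonZeroDivisors ℤ) (LinearMap.id : G →ₗ[ℤ] G) where
  map_units s := by
    have hs : (s : ℤ) ≠ 0 := nonZeroDivisors.coe_ne_zero s
    have : ⇑(algebraMap ℤ (Module.End ℤ G) s) = ((s : ℤ) • ·) :=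
      funext (Module.algebraMap_end_apply ℤ ℤ G _)
    rw [Module.End.isUnit_iff, this]
    exact ⟨zsmul_right_injective hs, DivisibleBy.surjective_smul G ℤ hs⟩
  surj y := ⟨(y, 1), one_smul _ _⟩
  exists_of_eq h := ⟨1, congrArg _ h⟩

noncomputable def ratTensorEquiv [IsAddTorsionFree G] [DivisibleBy G ℤ] : G ≃+ ℚ ⊗[ℤ] G :=
  haveI := IsLocalization.tensorProduct_isLocalizedModule (M := G) (nonZeroDivisors ℤ) ℚ
  (IsLocalizedModule.linearEquiv (nonZeroDivisors ℤ) LinearMap.id (mk ℤ ℚ G 1)).toAddEquiv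

theorem FiniteInjectiveRank.rank_lt_aleph0 {V : Type*} [AddCommGroup V] [Module ℚ V]
    (h : FiniteInjectiveRank V) : Module.rank ℚ V < Cardinal.aleph0 := by
  by_contra! hV
  obtain ⟨e⟩ : Nonempty (V ≃ₗ[ℚ] V × ULift ℚ) := by
    refine nonempty_linearEquiv_of_rank_eq ?_
    rw [rank_prod', rank_ulift, Module.rank_self, Cardinal.lift_one, Cardinal.add_one_eq hV]
  let φ : V →ₗ[ℚ] V := e.symm.toLinearMap ∘ₗ LinearMap.inl ℚ V (ULift ℚ)
  have hfin := (h φ.toAddMonoidHom).mp (e.symm.injective.comp LinearMap.inl_injective)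
  let χ : V ⧸ φ.toAddMonoidHom.range →+ ULift ℚ := QuotientAddGroup.lift _
    (LinearMap.snd ℚ V (ULift ℚ) ∘ₗ e.toLinearMap).toAddMonoidHom
    (by rintro _ ⟨v, rfl⟩; simp [φ])
  have : Surjective χ := fun q => ⟨QuotientAddGroup.mk (e.symm (0, q)), by simp [χ]⟩
  have := Infinite.of_surjective χ this
  exact not_finite (V ⧸ φ.toAddMonoidHom.range)

end Rational

section Divisible

variable {G : Type*} [AddCommGroup G]

theorem CoFinitelyHopfian.of_divisible (hdiv : ∀ n : ℕ, 0 < n → ∀ x : G, ∃ y : G, n • y = x) :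
    CoFinitelyHopfian G := by
  intro φ hfin g
  obtain ⟨y, rfl⟩ := hdiv (Nat.card (G ⧸ φ.range)) Nat.card_pos g
  rw [← AddMonoidHom.mem_range, ← QuotientAddGroup.eq_zero_iff, QuotientAddGroup.mk_nsmul,
    card_nsmul_eq_zero']

theorem FiniteInjectiveRank.divisible_of_coFinitelyHopfian (h : FiniteInjectiveRank G)
    (hc : CoFinitelyHopfian G) : ∀ n : ℕ, 0 < n → ∀ x : G, ∃ y : G, n • y = x := by
  have := h.isAddTorsionFree
  intro n hn
  exact hc (nsmulAddMonoidHom n) ((h _).mp (nsmul_right_injective hn.ne'))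

theorem exists_nsmul_eq_of_addEquiv {V : Type*} [AddCommGroup V] [Module ℚ V] (e : G ≃+ V) :
    ∀ n : ℕ, 0 < n → ∀ x : G, ∃ y : G, n • y = x := fun n hn x =>
  ⟨e.symm ((n : ℚ)⁻¹ • e x), e.injective <| by
    rw [map_nsmul, e.apply_symm_apply, ← Nat.cast_smul_eq_nsmul ℚ, smul_smul,
      mul_inv_cancel₀ (by positivity), one_smul]⟩

end Divisible

/-- For an abelian group `G` of finite injective rank, `G` is co-finitely Hopfian if
and only if `G` is divisible of finite rank (equivalently, since such a `G` is
torsion-free, `G ≅ ℚ ^ n` for some `n < ω`). -/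
theorem coFinitelyHopfian_iff_divisible_finiteRank (G : Type*) [AddCommGroup G]
    (h : FiniteInjectiveRank G) :
    (CoFinitelyHopfian G ↔
      ((∀ n : ℕ, 0 < n → ∀ x : G, ∃ y : G, n • y = x) ∧
        Module.rank ℚ (ℚ ⊗[ℤ] G) < Cardinal.aleph0)) ∧
    (CoFinitelyHopfian G ↔ ∃ n : ℕ, Nonempty (G ≃+ (Fin n → ℚ))) := by
  have := h.isAddTorsionFree
  have hcfh : CoFinitelyHopfian G ↔ ∀ n : ℕ, 0 < n → ∀ x : G, ∃ y : G, n • y = x :=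
    ⟨h.divisible_of_coFinitelyHopfian, .of_divisible⟩
  have hvect (hdiv : ∀ n : ℕ, 0 < n → ∀ x : G, ∃ y : G, n • y = x) :
      Module.rank ℚ (ℚ ⊗[ℤ] G) < Cardinal.aleph0 ∧ ∃ n : ℕ, Nonempty (G ≃+ (Fin n → ℚ)) := by
    let : DivisibleBy G ℕ := divisibleByOfSMulRightSurj G ℕ fun hn => hdiv _ (Nat.pos_of_ne_zero hn)
    let := AddGroup.divisibleByIntOfDivisibleByNat G
    have hrank := (h.of_addEquiv (ratTensorEquiv G)).rank_lt_aleph0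
    have := Module.rank_lt_aleph0_iff.mp hrank
    exact ⟨hrank, _, ⟨(ratTensorEquiv G).trans (Module.finBasis ℚ _).equivFun.toAddEquiv⟩⟩
  refine ⟨hcfh.trans ⟨fun hdiv => ⟨hdiv, (hvect hdiv).1⟩, And.left⟩,
    hcfh.trans ⟨fun hdiv => (hvect hdiv).2, fun ⟨_, ⟨e⟩⟩ => exists_nsmul_eq_of_addEquiv e⟩⟩
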